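/- arXiv:2209.06118 — 2 statements merged into one kernel-verified Lean document; each statement's English description precedes it below -/
import Mathlib

section
/- For every positive definite n×n complex matrix B, Tr B = max over positive definite n×n complex matrices X of Tr(X log B − X log X + X), and the maximum is attained at X = B. -/
open Matrix ComplexOrder

/-- Matrix logarithm via the continuous functional calculus. -/
noncomputable def mlog {N : Type*} [Fintype N] [DecidableEq N]
    (A : Matrix N N ℂ) : Matrix N N ℂ :=
  cfc Real.log A

lemma mlog_eq {N : Type*} [Fintype N] [DecidableEq N] {A : Matrix N N ℂ}
    (hA : A.IsHermitian) :
    mlog A = (hA.eigenvectorUnitary : Matrix N N ℂ) *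
      diagonal (Complex.ofReal ∘ Real.log ∘ hA.eigenvalues) *
      star (hA.eigenvectorUnitary : Matrix N N ℂ) := by
  rw [mlog, hA.cfc_eq]; rfl

lemma trace_key {N : Type*} [Fintype N] [DecidableEq N]
    (a b : N → ℝ) (U V : Matrix N N ℂ) :
    ((U * diagonal (Complex.ofReal ∘ a) * star U) *
      (V * diagonal (Complex.ofReal ∘ b) * star V)).trace
      = ↑(∑ i, ∑ j, a i * b j * Complex.normSq ((star U * V) i j)) := by
  set W := star U * V with hW
  have h1 : (U * diagonal (Complex.ofReal ∘ a) * star U) *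
      (V * diagonal (Complex.ofReal ∘ b) * star V)
      = U * (diagonal (Complex.ofReal ∘ a) * W * diagonal (Complex.ofReal ∘ b) * star V) := by
    simp only [hW, mul_assoc]
  rw [h1, Matrix.trace_mul_comm]
  have h2 : (diagonal (Complex.ofReal ∘ a) * W * diagonal (Complex.ofReal ∘ b) * star V) * U
      = diagonal (Complex.ofReal ∘ a) * W * diagonal (Complex.ofReal ∘ b) * star W := by
    rw [hW, StarMul.star_mul, star_star]; simp only [mul_assoc]
  rw [h2]
  have hM : ∀ i j, (diagonal (Complex.ofReal ∘ a) * W * diagonal (Complex.ofReal ∘ b)) i j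
      = ↑(a i) * W i j * ↑(b j) := by
    intro i j
    rw [Matrix.mul_diagonal, Matrix.diagonal_mul]
    simp [mul_comm]
  simp only [Matrix.trace, Matrix.diag_apply, Matrix.mul_apply (M := diagonal (Complex.ofReal ∘ a) * W * diagonal (Complex.ofReal ∘ b)), Matrix.star_eq_conjTranspose, Matrix.conjTranspose_apply]
  push_cast
  refine Finset.sum_congr rfl fun k _ => Finset.sum_congr rfl fun j _ => ?_
  rw [hM]
  have := Complex.mul_conj (W k j)
  calc (↑(a k) * W k j * ↑(b j)) * star (W k j)
      = ↑(a k) * ↑(b j) * (W k j * star (W k j)) := by ring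
    _ = ↑(a k) * ↑(b j) * ↑(Complex.normSq (W k j)) := by rw [Complex.star_def, Complex.mul_conj]

lemma scalar_ineq {x y : ℝ} (hx : 0 < x) (hy : 0 < y) :
    x * Real.log y - x * Real.log x + x ≤ y := by
  have h := Real.log_le_sub_one_of_pos (div_pos hy hx)
  rw [Real.log_div hy.ne' hx.ne'] at h
  have h2 : x * (Real.log y - Real.log x) ≤ x * (y / x - 1) :=
    mul_le_mul_of_nonneg_left h hx.le
  have h3 : x * (y / x - 1) = y - x := by field_simp
  nlinarith [h2, h3]

lemma row_sum {N : Type*} [Fintype N] [DecidableEq N] {W : Matrix N N ℂ}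
    (h : W * star W = 1) (i : N) : ∑ j, Complex.normSq (W i j) = 1 := by
  have h1 : (W * star W) i i = 1 := by rw [h]; simp [Matrix.one_apply]
  rw [Matrix.mul_apply] at h1
  apply Complex.ofReal_injective
  push_cast
  rw [← h1]
  refine Finset.sum_congr rfl fun j _ => ?_
  rw [Matrix.star_eq_conjTranspose, Matrix.conjTranspose_apply, Complex.star_def,
    Complex.mul_conj]

lemma col_sum {N : Type*} [Fintype N] [DecidableEq N] {W : Matrix N N ℂ}
    (h : star W * W = 1) (j : N) : ∑ i, Complex.normSq (W i j) = 1 := by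
  have h1 : (star W * W) j j = 1 := by rw [h]; simp [Matrix.one_apply]
  rw [Matrix.mul_apply] at h1
  apply Complex.ofReal_injective
  push_cast
  rw [← h1]
  refine Finset.sum_congr rfl fun i _ => ?_
  rw [Matrix.star_eq_conjTranspose, Matrix.conjTranspose_apply, Complex.star_def,
    mul_comm, Complex.mul_conj]

/-- `Tr B` is the maximum, over positive definite `X`, of `Tr(X log B − X log X + X)`,
and the maximum is attained at `X = B`. -/
theorem trace_eq_max_variational {n : ℕ} (B : Matrix (Fin n) (Fin n) ℂ) (hB : B.PosDef) :
    (∀ X : Matrix (Fin n) (Fin n) ℂ, X.PosDef →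
      (X * mlog B - X * mlog X + X).trace ≤ B.trace) ∧
    (B * mlog B - B * mlog B + B).trace = B.trace := by
  refine ⟨fun X hX => ?_, by simp⟩
  have hXh := hX.1
  have hBh := hB.1
  set dx := hXh.eigenvalues with hdx
  set db := hBh.eigenvalues with hdb
  set U : Matrix (Fin n) (Fin n) ℂ := (hXh.eigenvectorUnitary : Matrix (Fin n) (Fin n) ℂ) with hU
  set V : Matrix (Fin n) (Fin n) ℂ := (hBh.eigenvectorUnitary : Matrix (Fin n) (Fin n) ℂ) with hV
  set W : Matrix (Fin n) (Fin n) ℂ := star U * V with hWdef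
  set w : Fin n → Fin n → ℝ := fun i j => Complex.normSq (W i j) with hw
  have hUU : star U * U = 1 := Unitary.coe_star_mul_self _
  have hUU' : U * star U = 1 := Unitary.coe_mul_star_self _
  have hVV : star V * V = 1 := Unitary.coe_star_mul_self _
  have hVV' : V * star V = 1 := Unitary.coe_mul_star_self _
  have hWW : W * star W = 1 := by
    rw [hWdef, StarMul.star_mul, star_star]
    have : star U * V * (star V * U) = star U * ((V * star V) * U) := by
      simp only [mul_assoc]
    rw [this, hVV', one_mul, hUU]
  have hWW' : star W * W = 1 := by
    rw [hWdef, StarMul.star_mul, star_star]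
    have : star V * U * (star U * V) = star V * ((U * star U) * V) := by
      simp only [mul_assoc]
    rw [this, hUU', one_mul, hVV]
  have hXd : X = U * diagonal (Complex.ofReal ∘ dx) * star U := hXh.spectral_theorem
  have hBd : B = V * diagonal (Complex.ofReal ∘ db) * star V := hBh.spectral_theorem
  have hmB : mlog B = V * diagonal (Complex.ofReal ∘ (Real.log ∘ db)) * star V := mlog_eq hBh
  have hmX : mlog X = U * diagonal (Complex.ofReal ∘ (Real.log ∘ dx)) * star U := mlog_eq hXh
  have t1 : (X * mlog B).trace = ↑(∑ i, ∑ j, dx i * Real.log (db j) * w i j) := by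
    rw [hmB]
    conv_lhs => rw [hXd]
    rw [trace_key dx (Real.log ∘ db) U V]
    norm_cast
  have t2 : (X * mlog X).trace = ↑(∑ i, dx i * Real.log (dx i)) := by
    rw [hmX]
    conv_lhs => rw [hXd]
    rw [trace_key dx (Real.log ∘ dx) U U]
    norm_cast
    have hone : ∀ i j : Fin n, Complex.normSq ((star U * U) i j)
        = if i = j then 1 else 0 := by
      intro i j; rw [hUU]; simp [Matrix.one_apply, apply_ite]
    refine Finset.sum_congr rfl fun i _ => ?_
    simp only [hone, Function.comp_apply, mul_ite, mul_one, mul_zero]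
    simp [Finset.sum_ite_eq']
  have t3 : X.trace = ↑(∑ i, dx i) := by
    conv_lhs => rw [hXd]
    rw [Matrix.trace_mul_cycle, hUU, one_mul, Matrix.trace_diagonal]
    push_cast
    rfl
  have t4 : B.trace = ↑(∑ j, db j) := by
    conv_lhs => rw [hBd]
    rw [Matrix.trace_mul_cycle, hVV, one_mul, Matrix.trace_diagonal]
    push_cast
    rfl
  rw [Matrix.trace_add, Matrix.trace_sub, t1, t2, t3, t4,
    ← Complex.ofReal_sub, ← Complex.ofReal_add, Complex.real_le_real]
  have hrow : ∀ i, ∑ j, w i j = 1 := fun i => row_sum hWW i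
  have hcol : ∀ j, ∑ i, w i j = 1 := fun j => col_sum hWW' j
  have hdxp : ∀ i, 0 < dx i := fun i => hX.eigenvalues_pos i
  have hdbp : ∀ j, 0 < db j := fun j => hB.eigenvalues_pos j
  have e2 : ∑ i, dx i * Real.log (dx i)
      = ∑ i, ∑ j, w i j * (dx i * Real.log (dx i)) := by
    refine Finset.sum_congr rfl fun i _ => ?_
    rw [← Finset.sum_mul, hrow i, one_mul]
  have e3 : (∑ i, dx i) = ∑ i, ∑ j, w i j * dx i := by
    refine Finset.sum_congr rfl fun i _ => ?_
    rw [← Finset.sum_mul, hrow i, one_mul]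
  have e4 : (∑ j, db j) = ∑ i, ∑ j, w i j * db j := by
    rw [Finset.sum_comm]
    refine Finset.sum_congr rfl fun j _ => ?_
    rw [← Finset.sum_mul, hcol j, one_mul]
  rw [e2, e3, e4]
  have comb : (∑ i, ∑ j, dx i * Real.log (db j) * w i j)
      - (∑ i, ∑ j, w i j * (dx i * Real.log (dx i)))
      + (∑ i, ∑ j, w i j * dx i)
      = ∑ i, ∑ j, (dx i * Real.log (db j) * w i j
          - w i j * (dx i * Real.log (dx i)) + w i j * dx i) := by
    simp only [Finset.sum_sub_distrib, Finset.sum_add_distrib]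
  rw [comb]
  refine Finset.sum_le_sum fun i _ => Finset.sum_le_sum fun j _ => ?_
  have h := scalar_ineq (hdxp i) (hdbp j)
  have hwnn : 0 ≤ w i j := Complex.normSq_nonneg _
  nlinarith [mul_le_mul_of_nonneg_left h hwnn]
end

section
/- Let H be an n×n complex matrix with H*H ≤ I (a contraction), let L be a self-adjoint n×n complex matrix, and let A be a positive definite n×n complex matrix. Then Tr exp(L + H* log(A) H) = max over positive definite n×n complex matrices X of ( −S_{H*}(X∣A) + Tr(XL + A) ), where S_{H*}(X∣A) = Tr(X log X − HXH* log A − X + A). -/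
open Matrix ComplexOrder

/-- Matrix exponential. -/
noncomputable def mexp {N : Type*} [Fintype N] [DecidableEq N]
    (A : Matrix N N ℂ) : Matrix N N ℂ :=
  NormedSpace.exp A

/-- Reduced relative quantum entropy for the contraction `H*`:
`S_{H*}(X∣A) = Tr(X log X − HXH* log A − X + A)`. -/
noncomputable def SHstar {N : Type*} [Fintype N] [DecidableEq N]
    (H X A : Matrix N N ℂ) : ℂ :=
  (X * mlog X - H * X * Hᴴ * mlog A - X + A).trace

namespace QREAux
variable {n : ℕ}

variable {n : ℕ}

lemma trace_conj {U B : Matrix (Fin n) (Fin n) ℂ} (hU : star U * U = 1) :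
    (U * B * star U).trace = B.trace := by
  rw [Matrix.trace_mul_comm, ← mul_assoc, hU, one_mul]

lemma star_mul_cancel {U : Matrix (Fin n) (Fin n) ℂ} (hU : star U * U = 1)
    (X : Matrix (Fin n) (Fin n) ℂ) : star U * (U * X) = X := by
  rw [← mul_assoc, hU, one_mul]

lemma conj_mul_conj {U : Matrix (Fin n) (Fin n) ℂ} (hU : star U * U = 1)
    (B C : Matrix (Fin n) (Fin n) ℂ) :
    (U * B * star U) * (U * C * star U) = U * (B * C) * star U := by
  simp only [mul_assoc]
  rw [star_mul_cancel hU]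

lemma trace_conj_mul_conj {U V : Matrix (Fin n) (Fin n) ℂ}
    (hU : star U * U = 1) (hU' : U * star U = 1)
    (hV : star V * V = 1) (hV' : V * star V = 1) (a b : Fin n → ℂ) :
    ((U * diagonal a * star U) * (V * diagonal b * star V)).trace
      = ∑ i, ∑ j, a i * b j * ((star U * V) i j * star ((star U * V) i j)) := by
  have h1 : (U * diagonal a * star U) * (V * diagonal b * star V)
      = U * (diagonal a * (star U * V) * diagonal b * star (star U * V)) * star U := by
    rw [Matrix.star_mul, star_star]
    simp only [mul_assoc, hU', mul_one]
  rw [h1, trace_conj hU]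
  rw [Matrix.trace]
  refine Finset.sum_congr rfl fun i _ => ?_
  rw [Matrix.diag_apply]
  rw [show diagonal a * (star U * V) * diagonal b * star (star U * V)
      = (diagonal a * (star U * V) * diagonal b) * star (star U * V) by ring]
  rw [Matrix.mul_apply]
  refine Finset.sum_congr rfl fun j _ => ?_
  rw [Matrix.mul_diagonal, Matrix.diagonal_mul]
  simp only [Matrix.star_eq_conjTranspose, Matrix.conjTranspose_apply]
  ring

lemma row_sum {W : Matrix (Fin n) (Fin n) ℂ} (hW : W * star W = 1) (i : Fin n) :
    ∑ j, W i j * star (W i j) = 1 := by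
  have h := congrFun (congrFun hW i) i
  rw [Matrix.mul_apply] at h
  rw [Matrix.one_apply_eq] at h
  simp only [Matrix.star_eq_conjTranspose, Matrix.conjTranspose_apply] at h ⊢
  rw [h]

lemma col_sum {W : Matrix (Fin n) (Fin n) ℂ} (hW : star W * W = 1) (j : Fin n) :
    ∑ i, W i j * star (W i j) = 1 := by
  have h := congrFun (congrFun hW j) j
  rw [Matrix.mul_apply] at h
  rw [Matrix.one_apply_eq] at h
  simp only [Matrix.star_eq_conjTranspose, Matrix.conjTranspose_apply] at h ⊢
  rw [← h]
  exact Finset.sum_congr rfl fun i _ => by ring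



lemma klein_scalar {d e : ℝ} (hd : 0 < d) (he : 0 < e) :
    0 ≤ d * Real.log d - d * Real.log e - d + e := by
  have h := Real.log_le_sub_one_of_pos (div_pos he hd)
  rw [Real.log_div he.ne' hd.ne'] at h
  have h2 := mul_le_mul_of_nonneg_left h hd.le
  have h3 : d * (e / d) = e := by field_simp
  nlinarith [h2]

lemma klein {X Y : Matrix (Fin n) (Fin n) ℂ} (hX : X.PosDef) (hY : Y.PosDef) :
    0 ≤ (X * mlog X - X * mlog Y - X + Y).trace := by
  set U : Matrix (Fin n) (Fin n) ℂ := (hX.1.eigenvectorUnitary : Matrix (Fin n) (Fin n) ℂ)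
    with hUdef
  set V : Matrix (Fin n) (Fin n) ℂ := (hY.1.eigenvectorUnitary : Matrix (Fin n) (Fin n) ℂ)
    with hVdef
  have hU : star U * U = 1 := Unitary.star_mul_self_of_mem (SetLike.coe_mem _)
  have hU' : U * star U = 1 := Unitary.mul_star_self_of_mem (SetLike.coe_mem _)
  have hV : star V * V = 1 := Unitary.star_mul_self_of_mem (SetLike.coe_mem _)
  have hV' : V * star V = 1 := Unitary.mul_star_self_of_mem (SetLike.coe_mem _)
  set d : Fin n → ℝ := hX.1.eigenvalues with hddef
  set e : Fin n → ℝ := hY.1.eigenvalues with hedef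
  have hXeq : X = U * diagonal (fun i => (d i : ℂ)) * star U := hX.1.spectral_theorem
  have hYeq : Y = V * diagonal (fun i => (e i : ℂ)) * star V := hY.1.spectral_theorem
  have hlogX : mlog X = U * diagonal (fun i => (Real.log (d i) : ℂ)) * star U := by
    rw [mlog, hX.1.cfc_eq]; rfl
  have hlogY : mlog Y = V * diagonal (fun i => (Real.log (e i) : ℂ)) * star V := by
    rw [mlog, hY.1.cfc_eq]; rfl
  set W : Matrix (Fin n) (Fin n) ℂ := star U * V with hWdef
  have hWW : W * star W = 1 := by
    rw [hWdef, Matrix.star_mul, star_star]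
    have h : star U * V * (star V * U) = star U * (V * star V) * U := by
      simp only [mul_assoc]
    rw [h, hV', mul_one, hU]
  have hWW' : star W * W = 1 := by
    rw [hWdef, Matrix.star_mul, star_star]
    have h : star V * U * (star U * V) = star V * (U * star U) * V := by
      simp only [mul_assoc]
    rw [h, hU', mul_one, hV]
  set p : Fin n → Fin n → ℝ := fun i j => Complex.normSq (W i j) with hpdef
  have hpW : ∀ i j, W i j * star (W i j) = ((p i j : ℝ) : ℂ) := by
    intro i j
    rw [hpdef]
    exact Complex.mul_conj _
  have hrow : ∀ i, ∑ j, p i j = (1 : ℝ) := by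
    intro i
    have := row_sum hWW i
    simp_rw [hpW] at this
    exact_mod_cast this
  have hcol : ∀ j, ∑ i, p i j = (1 : ℝ) := by
    intro j
    have := col_sum hWW' j
    simp_rw [hpW] at this
    exact_mod_cast this
  have t1 : (X * mlog X).trace = ((∑ i, d i * Real.log (d i) : ℝ) : ℂ) := by
    rw [hlogX, hXeq, conj_mul_conj hU, diagonal_mul_diagonal, trace_conj hU, trace_diagonal]
    push_cast
    try rfl
  have t2 : (X * mlog Y).trace = ((∑ i, ∑ j, d i * Real.log (e j) * p i j : ℝ) : ℂ) := by
    rw [hlogY, hXeq, trace_conj_mul_conj hU hU' hV hV']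
    push_cast
    refine Finset.sum_congr rfl fun i _ => Finset.sum_congr rfl fun j _ => ?_
    rw [← hWdef, hpW]
    try push_cast
    try ring
  have t3 : X.trace = ((∑ i, d i : ℝ) : ℂ) := by
    rw [hXeq, trace_conj hU, trace_diagonal]
    push_cast
    try rfl
  have t4 : Y.trace = ((∑ j, e j : ℝ) : ℂ) := by
    rw [hYeq, trace_conj hV, trace_diagonal]
    push_cast
    try rfl
  rw [Matrix.trace_add, Matrix.trace_sub, Matrix.trace_sub, t1, t2, t3, t4]
  rw [show ((∑ i, d i * Real.log (d i) : ℝ) : ℂ) - ((∑ i, ∑ j, d i * Real.log (e j) * p i j : ℝ) : ℂ)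
      - ((∑ i, d i : ℝ) : ℂ) + ((∑ j, e j : ℝ) : ℂ)
      = (((∑ i, d i * Real.log (d i)) - (∑ i, ∑ j, d i * Real.log (e j) * p i j)
          - (∑ i, d i) + (∑ j, e j) : ℝ) : ℂ) by push_cast; ring]
  rw [Complex.zero_le_real]
  have key : (∑ i, d i * Real.log (d i)) - (∑ i, ∑ j, d i * Real.log (e j) * p i j)
      - (∑ i, d i) + (∑ j, e j)
      = ∑ i, ∑ j, p i j * (d i * Real.log (d i) - d i * Real.log (e j) - d i + e j) := by
    have e1 : (∑ i, d i * Real.log (d i)) = ∑ i, ∑ j, p i j * (d i * Real.log (d i)) := by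
      refine Finset.sum_congr rfl fun i _ => ?_
      rw [← Finset.sum_mul, hrow, one_mul]
    have e3 : (∑ i, d i) = ∑ i, ∑ j, p i j * d i := by
      refine Finset.sum_congr rfl fun i _ => ?_
      rw [← Finset.sum_mul, hrow, one_mul]
    have e4 : (∑ j, e j) = ∑ i, ∑ j, p i j * e j := by
      rw [Finset.sum_comm]
      refine Finset.sum_congr rfl fun j _ => ?_
      rw [← Finset.sum_mul, hcol, one_mul]
    rw [e1, e3, e4, ← Finset.sum_sub_distrib, ← Finset.sum_sub_distrib, ← Finset.sum_add_distrib]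
    refine Finset.sum_congr rfl fun i _ => ?_
    rw [← Finset.sum_sub_distrib, ← Finset.sum_sub_distrib, ← Finset.sum_add_distrib]
    refine Finset.sum_congr rfl fun j _ => ?_
    ring
  rw [key]
  refine Finset.sum_nonneg fun i _ => Finset.sum_nonneg fun j _ => ?_
  exact mul_nonneg (Complex.normSq_nonneg _)
    (klein_scalar (hX.eigenvalues_pos i) (hY.eigenvalues_pos j))


variable {n : ℕ}

lemma posdef_conj {U B : Matrix (Fin n) (Fin n) ℂ} (hB : B.PosDef)
    (hU : star U * U = 1) (hU' : U * star U = 1) : (U * B * star U).PosDef := by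
  rw [posDef_iff_dotProduct_mulVec]
  constructor
  · have h := Matrix.isHermitian_conjTranspose_mul_mul (star U) hB.1
    rwa [← Matrix.star_eq_conjTranspose, star_star] at h
  · intro x hx
    have hx' : star U *ᵥ x ≠ 0 := by
      intro hc
      apply hx
      have h2 := congrArg (fun v => U *ᵥ v) hc
      simpa [Matrix.mulVec_mulVec, hU', Matrix.one_mulVec] using h2
    have h := (posDef_iff_dotProduct_mulVec.mp hB).2 hx'
    simpa only [Matrix.star_mulVec, Matrix.dotProduct_mulVec, Matrix.vecMul_vecMul,
      Matrix.star_eq_conjTranspose, Matrix.conjTranspose_conjTranspose] using h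

lemma mexp_eq {M : Matrix (Fin n) (Fin n) ℂ} (hM : M.IsHermitian) :
    mexp M = (hM.eigenvectorUnitary : Matrix (Fin n) (Fin n) ℂ)
      * diagonal (fun i => (Real.exp (hM.eigenvalues i) : ℂ))
      * star (hM.eigenvectorUnitary : Matrix (Fin n) (Fin n) ℂ) := by
  set U : Matrix (Fin n) (Fin n) ℂ := (hM.eigenvectorUnitary : Matrix (Fin n) (Fin n) ℂ)
  have hU : star U * U = 1 := Unitary.star_mul_self_of_mem (SetLike.coe_mem _)
  have hU' : U * star U = 1 := Unitary.mul_star_self_of_mem (SetLike.coe_mem _)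
  have hUnit : IsUnit U := ⟨⟨U, star U, hU', hU⟩, rfl⟩
  have hinv : U⁻¹ = star U := Matrix.inv_eq_left_inv hU
  rw [mexp]
  conv_lhs => rw [hM.spectral_theorem, Unitary.conjStarAlgAut_apply]
  rw [← hinv, Matrix.exp_conj _ _ hUnit, Matrix.exp_diagonal, hinv]
  have hfun : NormedSpace.exp ((RCLike.ofReal ∘ hM.eigenvalues : Fin n → ℂ))
      = fun i => ((Real.exp (hM.eigenvalues i) : ℝ) : ℂ) := by
    rw [Pi.exp_def]
    funext i
    simp only [Function.comp_apply]
    rw [← Complex.exp_eq_exp_ℂ]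
    exact (Complex.ofReal_exp _).symm
  rw [hfun]

lemma mexp_posdef {M : Matrix (Fin n) (Fin n) ℂ} (hM : M.IsHermitian) :
    (mexp M).PosDef := by
  rw [mexp_eq hM]
  exact posdef_conj
    (Matrix.PosDef.diagonal fun i => Complex.zero_lt_real.mpr (Real.exp_pos _))
    (Unitary.star_mul_self_of_mem (SetLike.coe_mem _))
    (Unitary.mul_star_self_of_mem (SetLike.coe_mem _))

section
attribute [local instance] Matrix.instL2OpNormedRing Matrix.instL2OpNormedAlgebra

lemma mlog_mexp {M : Matrix (Fin n) (Fin n) ℂ} (hM : M.IsHermitian) :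
    mlog (mexp M) = M := by
  rw [mexp, mlog]
  exact CFC.log_exp M hM

end

lemma mlog_isHermitian {A : Matrix (Fin n) (Fin n) ℂ} : (mlog A).IsHermitian := by
  have h : IsSelfAdjoint (cfc Real.log A) := cfc_predicate _ _
  exact h

lemma identity (H L A X : Matrix (Fin n) (Fin n) ℂ) :
    -SHstar H X A + (X * L + A).trace
      = (X * (L + Hᴴ * mlog A * H)).trace + X.trace - (X * mlog X).trace := by
  rw [SHstar]
  have hc : (H * X * Hᴴ * mlog A).trace = (X * (Hᴴ * mlog A * H)).trace := by
    rw [show H * X * Hᴴ * mlog A = (H * X) * (Hᴴ * mlog A) by simp only [mul_assoc]]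
    rw [Matrix.trace_mul_comm]
    rw [show Hᴴ * mlog A * (H * X) = (Hᴴ * mlog A * H) * X by simp only [mul_assoc]]
    rw [Matrix.trace_mul_comm]
  simp only [Matrix.trace_sub, Matrix.trace_add, mul_add]
  rw [hc]
  ring


end QREAux

open QREAux in
/-- For a contraction `H`, self-adjoint `L` and positive definite `A`,
`Tr exp(L + H* log(A) H)` equals the maximum over positive definite `X` of
`−S_{H*}(X∣A) + Tr(XL + A)`. -/
theorem trace_exp_eq_max_variational {n : ℕ} (H L A : Matrix (Fin n) (Fin n) ℂ)
    (hH : (1 - Hᴴ * H).PosSemidef) (hL : L.IsHermitian) (hA : A.PosDef) :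
    IsGreatest {y : ℂ | ∃ X : Matrix (Fin n) (Fin n) ℂ, X.PosDef ∧
        y = -SHstar H X A + (X * L + A).trace}
      (mexp (L + Hᴴ * mlog A * H)).trace := by
  have hMh : (L + Hᴴ * mlog A * H).IsHermitian :=
    hL.add (Matrix.isHermitian_conjTranspose_mul_mul H mlog_isHermitian)
  set Y : Matrix (Fin n) (Fin n) ℂ := mexp (L + Hᴴ * mlog A * H) with hYdef
  have hY : Y.PosDef := mexp_posdef hMh
  have hlogY : mlog Y = L + Hᴴ * mlog A * H := mlog_mexp hMh
  constructor
  · refine ⟨Y, hY, ?_⟩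
    rw [identity H L A Y, hlogY]
    ring
  · rintro y ⟨X, hXpd, rfl⟩
    rw [identity H L A X, ← sub_nonneg]
    have hk := klein hXpd hY
    rw [hlogY] at hk
    have hrearr : (X * mlog X - X * (L + Hᴴ * mlog A * H) - X + Y).trace
        = Y.trace - ((X * (L + Hᴴ * mlog A * H)).trace + X.trace - (X * mlog X).trace) := by
      simp only [Matrix.trace_add, Matrix.trace_sub]
      ring
    rw [hrearr] at hk
    exact hk
end
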